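/- There exist a complex Hilbert space H and two unbounded self-adjoint operators A and B on H with D(A) = D(B), such that A ∘ A − B ∘ B (on its natural domain) is bounded, while A ∘ B − B ∘ A is unbounded. -/

import Mathlib

/- Unbounded (partially defined) operators on a complex Hilbert space are modelled by
Mathlib's `LinearPMap` (`H →ₗ.[ℂ] H`).  `T†` is the adjoint, `T.IsClosed` means the graph
of `T` is closed, and `f - g` is the difference with domain `D(f) ⊓ D(g)`. -/

noncomputable section

open LinearPMap

/-- The composition `S ∘ T` of two partially defined linear operators, with its natural
(maximal) domain `{x ∈ D(T) : T x ∈ D(S)}`, acting by `x ↦ S (T x)`. -/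
def pComp {R E F G : Type*} [Ring R] [AddCommGroup E] [Module R E]
    [AddCommGroup F] [Module R F] [AddCommGroup G] [Module R G]
    (S : F →ₗ.[R] G) (T : E →ₗ.[R] F) : E →ₗ.[R] G where
  domain := (S.domain.comap T.toFun).map T.domain.subtype
  toFun := (S.toFun.comp (T.toFun.restrict (q := S.domain) fun _ hx => hx)).comp
    (Submodule.equivMapOfInjective T.domain.subtype T.domain.injective_subtype
      (S.domain.comap T.toFun)).symm.toLinearMap

/-- A partially defined operator is bounded if `‖T x‖ ≤ C‖x‖` on its domain for some `C ≥ 0`. -/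
def IsBddOp {H : Type*} [NormedAddCommGroup H] [InnerProductSpace ℂ H]
    (T : H →ₗ.[ℂ] H) : Prop :=
  ∃ C : ℝ, 0 ≤ C ∧ ∀ x : T.domain, ‖T x‖ ≤ C * ‖(x : H)‖

/-- A partially defined operator is positive if `⟪T x, x⟫` is real and nonnegative
for every `x` in its domain. -/
def IsPosOp {H : Type*} [NormedAddCommGroup H] [InnerProductSpace ℂ H]
    (T : H →ₗ.[ℂ] H) : Prop :=
  ∀ x : T.domain, 0 ≤ (inner ℂ (T x) ((x : H)) : ℂ).re ∧ (inner ℂ (T x) ((x : H)) : ℂ).im = 0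

/-- A (bundled) complex Hilbert space. -/
structure HilbertC where
  carrier : Type
  [normed : NormedAddCommGroup carrier]
  [ips : InnerProductSpace ℂ carrier]
  [complete : CompleteSpace carrier]

attribute [instance] HilbertC.normed HilbertC.ips HilbertC.complete

/-- The product Hilbert space `H × H` (with inner product
`⟪(x₁,y₁),(x₂,y₂)⟫ = ⟪x₁,x₂⟫ + ⟪y₁,y₂⟫`), i.e. the `L²`-product `WithLp 2 (H × H)`. -/
abbrev HxH (H : Type) [NormedAddCommGroup H] [InnerProductSpace ℂ H] : Type :=
  WithLp 2 (H × H)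

/-- The canonical linear identification of the product Hilbert space `HxH H` with `H × H`. -/
abbrev prodE (H : Type) [NormedAddCommGroup H] [InnerProductSpace ℂ H] :
    HxH H ≃ₗ[ℂ] H × H := WithLp.linearEquiv 2 ℂ (H × H)


/-! On `ℓ²(ℕ × Bool) = ⨁ₙ ℂ²` take `A = N ⊗ Z` and `B = N ⊗ X`, where `N` multiplies the `n`-th
block by `n` and `Z`, `X` are the Pauli matrices:
`A e_{n,b} = ±n e_{n,b}` and `B e_{n,b} = n e_{n,¬b}`.
Since `Z² = X² = 1`, `A² = B² = N²` on the common domain, whereas `AB - BA = N² ⊗ [Z, X]` sends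
`e_{n,false}` to `2n² e_{n,true}`.
Both operators have the form `x ↦ (c i * x (σ i))ᵢ` with `σ` an involution and `c` real and
`σ`-invariant; such an operator is self-adjoint on `{x | c • x ∈ ℓ²}` because pairing its adjoint
with the basis vectors recovers the same coordinate formula. -/

open scoped lp ENNReal

section pComp

variable {R E F G : Type*} [Ring R] [AddCommGroup E] [Module R E]
  [AddCommGroup F] [Module R F] [AddCommGroup G] [Module R G]
  {S : F →ₗ.[R] G} {T : E →ₗ.[R] F}

theorem mem_pComp_domain_iff {x : E} :
    x ∈ (pComp S T).domain ↔ ∃ hx : x ∈ T.domain, T ⟨x, hx⟩ ∈ S.domain := by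
  constructor
  · rintro ⟨y, hy, rfl⟩
    exact ⟨y.2, hy⟩
  · rintro ⟨hx, hTx⟩
    exact ⟨⟨x, hx⟩, hTx, rfl⟩

theorem pComp_apply (x : (pComp S T).domain) (hx : (x : E) ∈ T.domain)
    (hTx : T ⟨x, hx⟩ ∈ S.domain) : pComp S T x = S ⟨T ⟨x, hx⟩, hTx⟩ := by
  obtain ⟨x, h⟩ := x
  have hpre : (Submodule.equivMapOfInjective T.domain.subtype T.domain.injective_subtype
      (S.domain.comap T.toFun)).symm ⟨x, h⟩ = ⟨⟨x, hx⟩, hTx⟩ := by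
    rw [LinearEquiv.symm_apply_eq]
    rfl
  change S.toFun (T.toFun.restrict _ ((Submodule.equivMapOfInjective T.domain.subtype
    T.domain.injective_subtype (S.domain.comap T.toFun)).symm ⟨x, h⟩)) = _
  rw [hpre]
  rfl

end pComp

theorem not_isBddOp_iff {H : Type*} [NormedAddCommGroup H] [InnerProductSpace ℂ H]
    {T : H →ₗ.[ℂ] H} :
    ¬ IsBddOp T ↔ ∀ C : ℝ, 0 ≤ C → ∃ x : T.domain, C * ‖(x : H)‖ < ‖T x‖ := by
  simp only [IsBddOp, not_exists, not_and, not_forall, not_le]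

theorem memℓp_comp_equiv_iff {α β : Type*} {E : Type*} [NormedAddCommGroup E] {p : ℝ≥0∞}
    (hp : 0 < p.toReal) (e : α ≃ β) {f : β → E} : Memℓp (f ∘ e) p ↔ Memℓp f p := by
  rw [memℓp_gen_iff hp, memℓp_gen_iff hp]
  exact e.summable_iff (f := fun i => ‖f i‖ ^ p.toReal)

section WeightedPerm

variable {α : Type*}

def weightDomain (c : α → ℝ) : Submodule ℂ ℓ²(α, ℂ) where
  carrier := {x | Memℓp (fun i => (c i : ℂ) * x i) 2}
  zero_mem' := by simpa [← Pi.zero_def] using zero_memℓp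
  add_mem' {x y} hx hy := by simpa [mul_add, ← Pi.add_def] using hx.add hy
  smul_mem' a x hx := by
    change Memℓp _ 2
    convert hx.const_smul a using 1
    ext i
    simp [mul_left_comm]

theorem mem_weightDomain_iff {c : α → ℝ} {x : ℓ²(α, ℂ)} :
    x ∈ weightDomain c ↔ Memℓp (fun i => (c i : ℂ) * x i) 2 := Iff.rfl

theorem weightDomain_congr {c c' : α → ℝ} (h : ∀ i, |c i| = |c' i|) :
    weightDomain c = weightDomain c' := by
  ext x
  simp only [mem_weightDomain_iff, memℓp_gen_iff (p := 2) (by norm_num), norm_mul,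
    Complex.norm_real, Real.norm_eq_abs, h]

theorem single_mem_weightDomain [DecidableEq α] (c : α → ℝ) (j : α) (a : ℂ) :
    lp.single 2 j a ∈ weightDomain c := by
  have h : (fun i => (c i : ℂ) * (lp.single 2 j a : ℓ²(α, ℂ)) i) =
      ⇑(lp.single 2 j ((c j : ℂ) * a) : ℓ²(α, ℂ)) := by
    ext i
    by_cases hij : i = j
    · subst hij; simp
    · simp [hij]
  rw [mem_weightDomain_iff, h]
  exact lp.memℓp _

theorem dense_weightDomain (c : α → ℝ) : Dense (weightDomain c : Set ℓ²(α, ℂ)) := by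
  classical
  intro x
  refine mem_closure_of_tendsto (lp.hasSum_single ENNReal.ofNat_ne_top x) (.of_forall fun s => ?_)
  exact Submodule.sum_mem _ fun i _ => single_mem_weightDomain c i (x i)

variable {c : α → ℝ} {σ : Equiv.Perm α}

theorem memℓp_weight_mul_comp (hc : ∀ i, c (σ i) = c i) {x : ℓ²(α, ℂ)}
    (hx : x ∈ weightDomain c) :
    Memℓp (fun i => (c i : ℂ) * x (σ i)) 2 := by
  rw [mem_weightDomain_iff, ← memℓp_comp_equiv_iff (by norm_num) σ] at hx
  simpa [Function.comp_def, hc] using hx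

def weightedPermOp (c : α → ℝ) (σ : Equiv.Perm α) (hc : ∀ i, c (σ i) = c i) :
    ℓ²(α, ℂ) →ₗ.[ℂ] ℓ²(α, ℂ) where
  domain := weightDomain c
  toFun :=
    { toFun x :=
        ⟨fun i => (c i : ℂ) * (x : ℓ²(α, ℂ)) (σ i), memℓp_weight_mul_comp hc x.2⟩
      map_add' x y := lp.ext <| funext fun i => by
        simp only [Submodule.coe_add, AddSubgroup.coe_add, PreLp.add_apply, mul_add]; rfl
      map_smul' a x := lp.ext <| funext fun i => by simp [mul_left_comm] }

variable (hc : ∀ i, c (σ i) = c i)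
include hc

theorem weightedPermOp_apply (x : (weightedPermOp c σ hc).domain) (i : α) :
    (weightedPermOp c σ hc x) i = c i * (x : ℓ²(α, ℂ)) (σ i) := rfl

theorem weightedPermOp_single [DecidableEq α] (j : α) (a : ℂ) :
    weightedPermOp c σ hc ⟨lp.single 2 j a, single_mem_weightDomain c j a⟩ =
      (lp.single 2 (σ.symm j) ((c j : ℂ) * a) : ℓ²(α, ℂ)) := by
  refine lp.ext (funext fun i => ?_)
  rw [weightedPermOp_apply]
  by_cases hij : i = σ.symm j
  · subst hij
    simp [← hc (σ.symm j)]
  · have : σ i ≠ j := fun h' => hij (σ.eq_symm_apply.2 h')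
    simp [hij, this]

theorem weightedPermOp_isFormalAdjoint (hσ : Function.Involutive σ) :
    (weightedPermOp c σ hc).IsFormalAdjoint (weightedPermOp c σ hc) := by
  intro x y
  rw [lp.inner_eq_tsum, lp.inner_eq_tsum, ← σ.tsum_eq]
  refine tsum_congr fun i => ?_
  simp only [weightedPermOp_apply, RCLike.inner_apply, map_mul, Complex.conj_ofReal, hσ i, hc]
  ring

theorem weightedPermOp_adjoint_apply (y : (weightedPermOp c σ hc)†.domain) (j : α) :
    ((weightedPermOp c σ hc)† y) j = c j * (y : ℓ²(α, ℂ)) (σ.symm j) := by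
  classical
  have hT := adjoint_isFormalAdjoint (dense_weightDomain (α := α) c) (T := weightedPermOp c σ hc)
  have := hT.symm ⟨lp.single 2 j 1, single_mem_weightDomain c j 1⟩ y
  rw [weightedPermOp_single hc, lp.inner_single_left, lp.inner_single_left] at this
  simpa [RCLike.inner_apply, mul_comm] using this.symm

theorem weightedPermOp_adjoint (hσ : Function.Involutive σ) :
    (weightedPermOp c σ hc)† = weightedPermOp c σ hc := by
  classical
  set T := weightedPermOp c σ hc
  have hle : T ≤ T† := (weightedPermOp_isFormalAdjoint hc hσ).le_adjoint (dense_weightDomain c)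
  have hdom : T†.domain ≤ T.domain := by
    intro y hy
    have hmem : Memℓp (fun j => (c j : ℂ) * y (σ.symm j)) 2 := by
      simpa only [← weightedPermOp_adjoint_apply hc ⟨y, hy⟩] using
        lp.memℓp (T† ⟨y, hy⟩)
    rw [← memℓp_comp_equiv_iff (by norm_num) σ] at hmem
    simpa [T, weightedPermOp, mem_weightDomain_iff, Function.comp_def, hc] using hmem
  exact (eq_of_le_of_domain_eq hle (le_antisymm hle.1 hdom)).symm

theorem not_isBddOp_weightedPermOp (hunb : ∀ C : ℝ, ∃ i, C < |c i|) :
    ¬ IsBddOp (weightedPermOp c σ hc) := by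
  classical
  refine not_isBddOp_iff.2 fun C _ => ?_
  obtain ⟨i, hi⟩ := hunb C
  refine ⟨⟨lp.single 2 (σ i) 1, single_mem_weightDomain c _ 1⟩, ?_⟩
  rw [weightedPermOp_single hc, lp.norm_single two_pos, lp.norm_single two_pos]
  simpa [hc] using hi

variable {c' : α → ℝ} {τ : Equiv.Perm α} (hc' : ∀ i, c' (τ i) = c' i)
include hc'

theorem pComp_weightedPermOp_apply
    (x : (pComp (weightedPermOp c σ hc) (weightedPermOp c' τ hc')).domain) (i : α) :
    pComp (weightedPermOp c σ hc) (weightedPermOp c' τ hc') x i =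
      c i * (c' (σ i) * (x : ℓ²(α, ℂ)) (τ (σ i))) := by
  obtain ⟨hx, hTx⟩ := mem_pComp_domain_iff.1 x.2
  rw [pComp_apply x hx hTx]
  rfl

theorem single_mem_pComp_weightedPermOp_domain [DecidableEq α] (j : α) (a : ℂ) :
    lp.single 2 j a ∈ (pComp (weightedPermOp c σ hc) (weightedPermOp c' τ hc')).domain :=
  mem_pComp_domain_iff.2 ⟨single_mem_weightDomain c' j a, by
    rw [weightedPermOp_single hc']
    exact single_mem_weightDomain c _ _⟩

end WeightedPerm

def level (p : ℕ × Bool) : ℝ := p.1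

def signedLevel (p : ℕ × Bool) : ℝ := if p.2 then p.1 else -p.1

def flipBool : Equiv.Perm (ℕ × Bool) :=
  Function.Involutive.toPerm (fun p => (p.1, !p.2)) fun p => by simp

theorem flipBool_apply (p : ℕ × Bool) : flipBool p = (p.1, !p.2) := rfl

theorem flipBool_involutive : Function.Involutive flipBool := fun p => by simp [flipBool_apply]

def opZ : ℓ²(ℕ × Bool, ℂ) →ₗ.[ℂ] ℓ²(ℕ × Bool, ℂ) :=
  weightedPermOp signedLevel (Equiv.refl _) fun _ => rfl

def opX : ℓ²(ℕ × Bool, ℂ) →ₗ.[ℂ] ℓ²(ℕ × Bool, ℂ) :=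
  weightedPermOp level flipBool fun _ => rfl

theorem exists_lt_abs_level (C : ℝ) : ∃ p, C < |level p| := by
  obtain ⟨n, hn⟩ := exists_nat_gt C
  exact ⟨(n, true), by simpa [level] using hn⟩

theorem exists_lt_abs_signedLevel (C : ℝ) : ∃ p, C < |signedLevel p| := by
  obtain ⟨n, hn⟩ := exists_nat_gt C
  exact ⟨(n, true), by simpa [signedLevel] using hn⟩

theorem opZ_domain_eq_opX_domain : opZ.domain = opX.domain :=
  weightDomain_congr fun ⟨n, b⟩ => by cases b <;> simp [signedLevel, level]

theorem pComp_opZ_opZ_eq_pComp_opX_opX (x : (pComp opZ opZ - pComp opX opX).domain) :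
    pComp opZ opZ ⟨x, x.2.1⟩ = pComp opX opX ⟨x, x.2.2⟩ := by
  refine lp.ext (funext fun p => ?_)
  calc _ = signedLevel p * (signedLevel p * (x : ℓ²(ℕ × Bool, ℂ)) p) :=
        pComp_weightedPermOp_apply _ _ _ p
    _ = level p * (level (flipBool p) * (x : ℓ²(ℕ × Bool, ℂ)) (flipBool (flipBool p))) := by
        obtain ⟨n, b⟩ := p
        cases b <;> simp [signedLevel, level, flipBool_apply]
    _ = (pComp opX opX ⟨x, x.2.2⟩ : ℓ²(ℕ × Bool, ℂ)) p :=
        Eq.symm (pComp_weightedPermOp_apply _ _ _ p)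

theorem isBddOp_sq_sub_sq : IsBddOp (pComp opZ opZ - pComp opX opX) :=
  ⟨0, le_rfl, fun x => by
    rw [LinearPMap.sub_apply, pComp_opZ_opZ_eq_pComp_opX_opX, sub_self, norm_zero, zero_mul]⟩

theorem not_isBddOp_commutator : ¬ IsBddOp (pComp opZ opX - pComp opX opZ) := by
  refine not_isBddOp_iff.2 fun C hC => ?_
  obtain ⟨n, hn⟩ := exists_nat_gt C
  let x : (pComp opZ opX - pComp opX opZ).domain :=
    ⟨lp.single 2 (n, false) 1,
      single_mem_pComp_weightedPermOp_domain (fun _ => rfl) (fun _ => rfl) _ _,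
      single_mem_pComp_weightedPermOp_domain (fun _ => rfl) (fun _ => rfl) _ _⟩
  have hx : ‖(x : ℓ²(ℕ × Bool, ℂ))‖ = 1 := by simp [x, lp.norm_single two_pos]
  have hZX : (pComp opZ opX ⟨x, x.2.1⟩ : ℓ²(ℕ × Bool, ℂ)) (n, true) =
      signedLevel (n, true) * (level (n, true) * (x : ℓ²(ℕ × Bool, ℂ)) (n, false)) :=
    pComp_weightedPermOp_apply _ _ _ _
  have hXZ : (pComp opX opZ ⟨x, x.2.2⟩ : ℓ²(ℕ × Bool, ℂ)) (n, true) =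
      level (n, true) * (signedLevel (n, false) * (x : ℓ²(ℕ × Bool, ℂ)) (n, false)) :=
    pComp_weightedPermOp_apply _ _ _ _
  have hcoord : (pComp opZ opX - pComp opX opZ) x (n, true) = 2 * n ^ 2 := by
    rw [LinearPMap.sub_apply, lp.coeFn_sub, Pi.sub_apply, hZX, hXZ]
    simp only [x, lp.single_apply, Pi.single_eq_same, signedLevel, level, if_true,
      Bool.false_eq_true, if_false]
    push_cast
    ring
  have hn1 : (1 : ℝ) ≤ n := Nat.one_le_cast.2 (Nat.cast_pos.1 (hC.trans_lt hn))
  refine ⟨x, ?_⟩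
  calc C * ‖(x : ℓ²(ℕ × Bool, ℂ))‖ < 2 * n ^ 2 := by rw [hx]; nlinarith
    _ = ‖(pComp opZ opX - pComp opX opZ) x (n, true)‖ := by rw [hcoord]; simp
    _ ≤ ‖(pComp opZ opX - pComp opX opZ) x‖ := lp.norm_apply_le_norm two_ne_zero _ _

/-- There exist a complex Hilbert space `H` and two unbounded self-adjoint operators `A`, `B`
with `D(A) = D(B)`, such that `A ∘ A - B ∘ B` is bounded while `A ∘ B - B ∘ A` is unbounded. -/
theorem stmt_2 :
    ∃ (𝓗 : HilbertC) (A B : 𝓗.carrier →ₗ.[ℂ] 𝓗.carrier),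
      A† = A ∧ B† = B ∧ ¬ IsBddOp A ∧ ¬ IsBddOp B ∧ A.domain = B.domain ∧
      IsBddOp (pComp A A - pComp B B) ∧ ¬ IsBddOp (pComp A B - pComp B A) :=
  ⟨⟨ℓ²(ℕ × Bool, ℂ)⟩, opZ, opX,
    weightedPermOp_adjoint _ fun _ => rfl, weightedPermOp_adjoint _ flipBool_involutive,
    not_isBddOp_weightedPermOp _ exists_lt_abs_signedLevel,
    not_isBddOp_weightedPermOp _ exists_lt_abs_level,
    opZ_domain_eq_opX_domain, isBddOp_sq_sub_sq, not_isBddOp_commutator⟩
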